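/- Under condition (U) (E[y_a − μ_a(X)|Z] = θ_a − E[μ_a(X)] a.s. for all a) and condition (G2) (Cov(Y − μ(X), μ(X)) = 0), the asymptotic covariance matrix V = diag(π_a^{-1} Var(y_a − μ_a(X))) + Cov(Y − μ(X), μ(X)) + Cov(μ(X), Y) of the AIPW estimator satisfies: the difference between the unadjusted variance V̄ = diag(π_a^{-1} Var(y_a)) − E[R_Y(Z)(Ω_SR − Ω(Z))R_Y(Z)] and V equals diag(π_a^{-1} E[Var(μ_a(X)|Z)]) − E[Var(μ(X)|Z)] + E[R_X(Z) Ω(Z) R_X(Z)], which is positive semidefinite whenever Ω(Z) is positive semidefinite almost surely. -/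

import Mathlib

open MeasureTheory Matrix ENNReal

/-- Covariance of two real random variables. -/
noncomputable def covR {Ω : Type*} [MeasurableSpace Ω] (P : Measure Ω) (f g : Ω → ℝ) : ℝ :=
  ∫ ω, f ω * g ω ∂P - (∫ ω, f ω ∂P) * (∫ ω, g ω ∂P)

/-- Conditional mean of `f` given the event `s`. -/
noncomputable def condMean {Ω : Type*} [MeasurableSpace Ω] (P : Measure Ω)
    (s : Set Ω) (f : Ω → ℝ) : ℝ := (∫ ω in s, f ω ∂P) / (P s).toReal

section Helpers

variable {Ω : Type*} [MeasurableSpace Ω] {P : Measure Ω} {s : Set Ω} {f g h : Ω → ℝ}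

lemma intg_mul {Q : Measure Ω} (hf : MemLp f 2 Q) (hg : MemLp g 2 Q) :
    Integrable (fun ω => f ω * g ω) Q := by
  have h2 : (1:ℝ≥0∞)/1 = 1/2 + 1/2 := by
    rw [ENNReal.div_add_div_same, one_div_one, one_add_one_eq_two,
      ENNReal.div_self (two_ne_zero) (ENNReal.ofNat_ne_top)]
  exact memLp_one_iff_integrable.mp (hg.smul (r := 1) hf)

/-- The conditional probability measure given `s`. -/
noncomputable def Qm (P : Measure Ω) (s : Set Ω) : Measure Ω := (P s)⁻¹ • P.restrict s

lemma condMean_eq : condMean P s f = ∫ ω, f ω ∂(Qm P s) := by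
  rw [Qm, integral_smul_measure, ENNReal.toReal_inv, smul_eq_mul, condMean, div_eq_inv_mul]

lemma Qm_prob (hs : P s ≠ 0) (hs' : P s ≠ ⊤) : IsProbabilityMeasure (Qm P s) := by
  constructor
  rw [Qm, Measure.smul_apply, Measure.restrict_apply MeasurableSet.univ, Set.univ_inter,
    smul_eq_mul, ENNReal.inv_mul_cancel hs hs']

lemma memLp_toQm (hf : MemLp f 2 P) (hs : P s ≠ 0) : MemLp f 2 (Qm P s) :=
  (hf.restrict s).smul_measure (by simp [hs])

lemma condMean_sub (hf : Integrable f (Qm P s)) (hg : Integrable g (Qm P s)) :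
    condMean P s (fun ω => f ω - g ω) = condMean P s f - condMean P s g := by
  simp_rw [condMean_eq]
  exact integral_sub hf hg

lemma condMean_sub_const (hQ : IsProbabilityMeasure (Qm P s))
    (hf : Integrable f (Qm P s)) (c : ℝ) :
    condMean P s (fun ω => f ω - c) = condMean P s f - c := by
  simp_rw [condMean_eq]
  rw [integral_sub hf (integrable_const c), integral_const]
  simp

lemma cm_const (hl : (P s).toReal ≠ 0) (c : ℝ) : condMean P s (fun _ => c) = c := by
  rw [condMean, setIntegral_const, smul_eq_mul, mul_comm, mul_div_assoc, measureReal_def, div_self hl, mul_one]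

section prob
variable [IsProbabilityMeasure P]

lemma covR_comm : covR P f g = covR P g f := by
  unfold covR; simp_rw [mul_comm (f _) (g _)]; ring

lemma covR_sub_left (hf : MemLp f 2 P) (hg : MemLp g 2 P) (hh : MemLp h 2 P) :
    covR P (fun ω => f ω - g ω) h = covR P f h - covR P g h := by
  unfold covR
  have e1 : ∀ ω, (f ω - g ω) * h ω = f ω * h ω - g ω * h ω := fun ω => by ring
  simp_rw [e1]
  rw [integral_sub (intg_mul hf hh) (intg_mul hg hh),
    integral_sub (hf.integrable one_le_two) (hg.integrable one_le_two)]
  ring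

lemma covR_sub_right (hf : MemLp f 2 P) (hg : MemLp g 2 P) (hh : MemLp h 2 P) :
    covR P h (fun ω => f ω - g ω) = covR P h f - covR P h g := by
  rw [covR_comm, covR_sub_left hf hg hh, covR_comm (f := f), covR_comm (f := g)]

end prob

lemma total_int {L : ℕ} {Z : Ω → Fin L} (hZ : Measurable Z) (hf : Integrable f P) :
    ∫ ω, f ω ∂P = ∑ l, ∫ ω in {ω | Z ω = l}, f ω ∂P := by
  have hms : ∀ l : Fin L, MeasurableSet {ω | Z ω = l} := fun l => hZ (measurableSet_singleton l)
  have h1 : ∀ ω, f ω = ∑ l, Set.indicator {ω | Z ω = l} f ω := by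
    intro ω
    rw [Finset.sum_eq_single (Z ω)]
    · simp [Set.indicator_of_mem, Set.mem_setOf_eq]
    · intro b _ hb; exact Set.indicator_of_notMem (by simp [Ne.symm hb]) f
    · simp
  calc ∫ ω, f ω ∂P = ∫ ω, ∑ l, Set.indicator {ω | Z ω = l} f ω ∂P := by
        congr 1; ext ω; exact h1 ω
    _ = ∑ l, ∫ ω, Set.indicator {ω | Z ω = l} f ω ∂P :=
        integral_finset_sum _ (fun l _ => hf.indicator (hms l))
    _ = ∑ l, ∫ ω in {ω | Z ω = l}, f ω ∂P :=
        Finset.sum_congr rfl fun l _ => integral_indicator (hms l)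

lemma total_cm {L : ℕ} {Z : Ω → Fin L} (hZ : Measurable Z)
    (hZpos : ∀ l, 0 < (P {ω | Z ω = l}).toReal) (hf : Integrable f P) :
    ∫ ω, f ω ∂P = ∑ l, (P {ω | Z ω = l}).toReal * condMean P {ω | Z ω = l} f := by
  rw [total_int hZ hf]
  refine Finset.sum_congr rfl fun l _ => ?_
  rw [condMean, mul_div_cancel₀ _ (hZpos l).ne']

lemma psum_one [IsProbabilityMeasure P] {L : ℕ} {Z : Ω → Fin L} (hZ : Measurable Z)
    (hZpos : ∀ l, 0 < (P {ω | Z ω = l}).toReal) :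
    ∑ l, (P {ω | Z ω = l}).toReal = 1 := by
  have := total_cm (f := fun _ => (1:ℝ)) hZ hZpos (integrable_const 1)
  simp only [integral_const, probReal_univ, measure_univ, ENNReal.toReal_one, smul_eq_mul, one_mul] at this
  rw [this]
  refine Finset.sum_congr rfl fun l _ => ?_
  rw [cm_const (hZpos l).ne', mul_one]

/-- Law of total covariance (conditional-mean form). -/
lemma cov_total [IsProbabilityMeasure P] {L : ℕ} {Z : Ω → Fin L} (hZ : Measurable Z)
    (hZpos : ∀ l, 0 < (P {ω | Z ω = l}).toReal)
    (hf : MemLp f 2 P) (hg : MemLp g 2 P) :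
    covR P f g = (∑ l, (P {ω | Z ω = l}).toReal *
        (condMean P {ω | Z ω = l} (fun ω => f ω * g ω)
          - condMean P {ω | Z ω = l} f * condMean P {ω | Z ω = l} g))
      + ∑ l, (P {ω | Z ω = l}).toReal *
        ((condMean P {ω | Z ω = l} f - ∫ ω, f ω ∂P)
          * (condMean P {ω | Z ω = l} g - ∫ ω, g ω ∂P)) := by
  have hfint := hf.integrable one_le_two
  have hgint := hg.integrable one_le_two
  have hfg := total_cm hZ hZpos (intg_mul hf hg)
  have h1 := total_cm hZ hZpos hfint
  have h2 := total_cm hZ hZpos hgint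
  have hps := psum_one hZ hZpos
  set m1 := ∫ ω, f ω ∂P
  set m2 := ∫ ω, g ω ∂P
  have key : ∀ l : Fin L, (P {ω | Z ω = l}).toReal *
        (condMean P {ω | Z ω = l} (fun ω => f ω * g ω)
          - condMean P {ω | Z ω = l} f * condMean P {ω | Z ω = l} g)
      + (P {ω | Z ω = l}).toReal *
        ((condMean P {ω | Z ω = l} f - m1) * (condMean P {ω | Z ω = l} g - m2))
      = (P {ω | Z ω = l}).toReal * condMean P {ω | Z ω = l} (fun ω => f ω * g ω)
        - ((P {ω | Z ω = l}).toReal * condMean P {ω | Z ω = l} f) * m2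
        - m1 * ((P {ω | Z ω = l}).toReal * condMean P {ω | Z ω = l} g)
        + (P {ω | Z ω = l}).toReal * (m1 * m2) := fun l => by ring
  rw [← Finset.sum_add_distrib]
  calc covR P f g = (∑ l, (P {ω | Z ω = l}).toReal *
          condMean P {ω | Z ω = l} (fun ω => f ω * g ω))
        - (∑ l, (P {ω | Z ω = l}).toReal * condMean P {ω | Z ω = l} f) * m2
        - m1 * (∑ l, (P {ω | Z ω = l}).toReal * condMean P {ω | Z ω = l} g)
        + (∑ l, (P {ω | Z ω = l}).toReal) * (m1 * m2) := by
        rw [← hfg, ← h1, ← h2, hps, covR]; ring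
    _ = ∑ l, ((P {ω | Z ω = l}).toReal * condMean P {ω | Z ω = l} (fun ω => f ω * g ω)
        - ((P {ω | Z ω = l}).toReal * condMean P {ω | Z ω = l} f) * m2
        - m1 * ((P {ω | Z ω = l}).toReal * condMean P {ω | Z ω = l} g)
        + (P {ω | Z ω = l}).toReal * (m1 * m2)) := by
        rw [Finset.sum_add_distrib, Finset.sum_sub_distrib, Finset.sum_sub_distrib,
          ← Finset.sum_mul, ← Finset.mul_sum, ← Finset.sum_mul]
    _ = _ := (Finset.sum_congr rfl fun l _ => (key l)).symm
lemma cs_quad {Ω : Type*} [MeasurableSpace Ω] (Q : Measure Ω) [IsProbabilityMeasure Q]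
    {k : ℕ} (π x : Fin k → ℝ) (hπ : ∀ a, 0 < π a) (hπsum : ∑ a, π a = 1)
    (μ : Fin k → Ω → ℝ) (hμ : ∀ a, MemLp (μ a) 2 Q) :
    ∑ a, ∑ b, x a * x b * ((∫ ω, μ a ω * μ b ω ∂Q) - (∫ ω, μ a ω ∂Q) * (∫ ω, μ b ω ∂Q))
      ≤ ∑ a, (π a)⁻¹ * x a ^ 2 * ((∫ ω, μ a ω ^ 2 ∂Q) - (∫ ω, μ a ω ∂Q) ^ 2) := by
  set e : Fin k → ℝ := fun a => ∫ ω, μ a ω ∂Q with he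
  set f : Fin k → Ω → ℝ := fun a ω => μ a ω - e a with hf
  have hfL2 : ∀ a, MemLp (f a) 2 Q := fun a => (hμ a).sub (memLp_const (e a))
  have hff : ∀ a b, Integrable (fun ω => f a ω * f b ω) Q :=
    fun a b => intg_mul (hfL2 a) (hfL2 b)
  have hμint : ∀ a, Integrable (μ a) Q := fun a => (hμ a).integrable one_le_two
  have step1 : ∀ a b, ∫ ω, f a ω * f b ω ∂Q
      = (∫ ω, μ a ω * μ b ω ∂Q) - e a * e b := by
    intro a b
    have e1 : ∀ ω, f a ω * f b ω
        = (μ a ω * μ b ω - e a * μ b ω) - (e b * μ a ω - e a * e b) := by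
      intro ω; simp only [hf]; ring
    have I1 : Integrable (fun ω => μ a ω * μ b ω - e a * μ b ω) Q :=
      (intg_mul (hμ a) (hμ b)).sub ((hμint b).const_mul (e a))
    have I2 : Integrable (fun ω => e b * μ a ω - e a * e b) Q :=
      ((hμint a).const_mul (e b)).sub (integrable_const _)
    simp_rw [e1]
    rw [integral_sub I1 I2,
      integral_sub (intg_mul (hμ a) (hμ b)) ((hμint b).const_mul (e a)),
      integral_sub ((hμint a).const_mul (e b)) (integrable_const _),
      integral_const_mul, integral_const_mul, integral_const]
    simp [← he]
    ring
  have step1' : ∀ a, ∫ ω, f a ω ^ 2 ∂Q = (∫ ω, μ a ω ^ 2 ∂Q) - e a ^ 2 := by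
    intro a
    have e2 : ∀ ω, f a ω ^ 2 = f a ω * f a ω := fun ω => sq (f a ω)
    have e3 : ∀ ω, μ a ω ^ 2 = μ a ω * μ a ω := fun ω => sq (μ a ω)
    simp_rw [e2, e3, step1 a a, sq]
  -- reduce to integrals of f
  have lhs_eq : ∑ a, ∑ b, x a * x b *
        ((∫ ω, μ a ω * μ b ω ∂Q) - (∫ ω, μ a ω ∂Q) * (∫ ω, μ b ω ∂Q))
      = ∫ ω, (∑ a, x a * f a ω) ^ 2 ∂Q := by
    have e4 : ∀ ω, (∑ a, x a * f a ω) ^ 2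
        = ∑ a, ∑ b, x a * x b * (f a ω * f b ω) := by
      intro ω
      rw [sq, Finset.sum_mul_sum]
      exact Finset.sum_congr rfl fun a _ => Finset.sum_congr rfl fun b _ => by ring
    simp_rw [e4]
    rw [integral_finset_sum _ (fun a _ => integrable_finset_sum _
      (fun b _ => ((hff a b).const_mul _)))]
    refine Finset.sum_congr rfl fun a _ => ?_
    rw [integral_finset_sum _ (fun b _ => ((hff a b).const_mul _))]
    refine Finset.sum_congr rfl fun b _ => ?_
    rw [integral_const_mul, step1 a b, he]
  have rhs_eq : ∑ a, (π a)⁻¹ * x a ^ 2 * ((∫ ω, μ a ω ^ 2 ∂Q) - (∫ ω, μ a ω ∂Q) ^ 2)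
      = ∫ ω, ∑ a, (π a)⁻¹ * x a ^ 2 * f a ω ^ 2 ∂Q := by
    rw [integral_finset_sum _ (fun a _ => by
      have : Integrable (fun ω => f a ω ^ 2) Q := by
        simpa [sq] using hff a a
      exact this.const_mul _)]
    exact Finset.sum_congr rfl fun a _ => by rw [integral_const_mul, step1' a, he]
  rw [lhs_eq, rhs_eq]
  refine integral_mono ?_ ?_ ?_
  · have : MemLp (fun ω => ∑ a, x a * f a ω) 2 Q := by
      refine memLp_finset_sum _ (fun a _ => ((hfL2 a).const_mul (x a)))
    simpa [sq] using intg_mul this this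
  · exact integrable_finset_sum _ (fun a _ => by
      have : Integrable (fun ω => f a ω ^ 2) Q := by simpa [sq] using hff a a
      exact this.const_mul _)
  · intro ω
    have cs := Finset.sum_mul_sq_le_sq_mul_sq Finset.univ
      (fun a => Real.sqrt (π a)) (fun a => x a * f a ω / Real.sqrt (π a))
    have hs0 : ∀ a : Fin k, Real.sqrt (π a) ≠ 0 :=
      fun a => (Real.sqrt_ne_zero'.mpr (hπ a))
    have h1 : ∀ a : Fin k, Real.sqrt (π a) * (x a * f a ω / Real.sqrt (π a))
        = x a * f a ω := fun a => by
      rw [mul_comm, div_mul_cancel₀ _ (hs0 a)]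
    have h2 : ∑ a, Real.sqrt (π a) ^ 2 = 1 := by
      rw [← hπsum]; exact Finset.sum_congr rfl fun a _ => Real.sq_sqrt (hπ a).le
    simp_rw [h1, h2, one_mul] at cs
    calc (∑ a, x a * f a ω) ^ 2 ≤ ∑ a, (x a * f a ω / Real.sqrt (π a)) ^ 2 := cs
      _ = ∑ a, (π a)⁻¹ * x a ^ 2 * f a ω ^ 2 := by
          refine Finset.sum_congr rfl fun a _ => ?_
          rw [div_pow, Real.sq_sqrt (hπ a).le]
          field_simp

end Helpers

lemma psd_smul {n : ℕ} {c : ℝ} (hc : 0 ≤ c) {M : Matrix (Fin n) (Fin n) ℝ}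
    (h : M.PosSemidef) : (c • M).PosSemidef := by
  refine Matrix.PosSemidef.of_dotProduct_mulVec_nonneg ?_ ?_
  · show (c • M)ᴴ = c • M
    rw [Matrix.conjTranspose_smul, h.1]
    simp
  · intro x
    rw [Matrix.smul_mulVec, dotProduct_smul, smul_eq_mul]
    exact mul_nonneg hc (h.dotProduct_mulVec_nonneg x)

/-- Under (U) and (G2), the difference between the unadjusted asymptotic
variance `V̄ = diag(π_a⁻¹ Var y_a) − E[R_Y(Ω_SR − Ω(Z))R_Y]` and the AIPW variance
`V = diag(π_a⁻¹ Var(y_a − μ_a(X))) + Cov(Y − μ(X), μ(X)) + Cov(μ(X), Y)` is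
`diag(π_a⁻¹ E[Var(μ_a(X)|Z)]) − E[Var(μ(X)|Z)] + E[R_X Ω(Z) R_X]`, which is positive
semidefinite whenever `Ω(Z)` is positive semidefinite a.s. -/
theorem stmt_17 {Ω : Type*} [MeasurableSpace Ω] (P : Measure Ω) [IsProbabilityMeasure P]
    {k L : ℕ} (y μX : Fin k → Ω → ℝ) (Z : Ω → Fin L)
    (hy : ∀ a, MemLp (y a) 2 P) (hμ : ∀ a, MemLp (μX a) 2 P)
    (hZ : Measurable Z) (hZpos : ∀ l, 0 < (P {ω | Z ω = l}).toReal)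
    (π : Fin k → ℝ) (hπ : ∀ a, 0 < π a) (hπsum : ∑ a, π a = 1)
    (θ : Fin k → ℝ) (hθ : ∀ a, θ a = ∫ ω, y a ω ∂P)
    (hU : ∀ l a, condMean P {ω | Z ω = l} (fun ω => y a ω - μX a ω)
        = θ a - ∫ ω, μX a ω ∂P)
    (hG2 : ∀ a b, covR P (fun ω => y a ω - μX a ω) (μX b) = 0)
    (Om : Fin L → Matrix (Fin k) (Fin k) ℝ) (hOsym : ∀ l, (Om l).IsSymm)
    (RY RX : Fin L → Matrix (Fin k) (Fin k) ℝ)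
    (hRY : ∀ l, RY l = Matrix.diagonal (fun a =>
      (π a)⁻¹ * condMean P {ω | Z ω = l} (fun ω => y a ω - θ a)))
    (hRX : ∀ l, RX l = Matrix.diagonal (fun a =>
      (π a)⁻¹ * condMean P {ω | Z ω = l} (fun ω => μX a ω - ∫ ω', μX a ω' ∂P)))
    (Vbar V D : Matrix (Fin k) (Fin k) ℝ)
    (hVbar : Vbar = Matrix.diagonal (fun a => (π a)⁻¹ * covR P (y a) (y a))
      - ∑ l, (P {ω | Z ω = l}).toReal •
          (RY l * (Matrix.diagonal π - Matrix.vecMulVec π π - Om l) * RY l))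
    (hV : V = Matrix.diagonal (fun a => (π a)⁻¹ *
          covR P (fun ω => y a ω - μX a ω) (fun ω => y a ω - μX a ω))
      + Matrix.of (fun a b => covR P (fun ω => y a ω - μX a ω) (μX b))
      + Matrix.of (fun a b => covR P (μX a) (y b)))
    (hD : D = Matrix.diagonal (fun a => (π a)⁻¹ * ∑ l, (P {ω | Z ω = l}).toReal *
          (condMean P {ω | Z ω = l} (fun ω => μX a ω ^ 2)
            - condMean P {ω | Z ω = l} (μX a) ^ 2))
      - Matrix.of (fun a b => ∑ l, (P {ω | Z ω = l}).toReal *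
          (condMean P {ω | Z ω = l} (fun ω => μX a ω * μX b ω)
            - condMean P {ω | Z ω = l} (μX a) * condMean P {ω | Z ω = l} (μX b)))
      + ∑ l, (P {ω | Z ω = l}).toReal • (RX l * Om l * RX l)) :
    Vbar - V = D ∧ ((∀ l, (Om l).PosSemidef) → D.PosSemidef) := by
  have hP0 : ∀ l : Fin L, P {ω | Z ω = l} ≠ 0 := fun l h => by simpa [h] using hZpos l
  have hQprob : ∀ l : Fin L, IsProbabilityMeasure (Qm P {ω | Z ω = l}) :=
    fun l => Qm_prob (hP0 l) (measure_ne_top P _)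
  have hμQ : ∀ (l : Fin L) a, MemLp (μX a) 2 (Qm P {ω | Z ω = l}) :=
    fun l a => memLp_toQm (hμ a) (hP0 l)
  have hyQ : ∀ (l : Fin L) a, MemLp (y a) 2 (Qm P {ω | Z ω = l}) :=
    fun l a => memLp_toQm (hy a) (hP0 l)
  have hμQi : ∀ (l : Fin L) a, Integrable (μX a) (Qm P {ω | Z ω = l}) := fun l a => by
    haveI := hQprob l; exact (hμQ l a).integrable one_le_two
  have hyQi : ∀ (l : Fin L) a, Integrable (y a) (Qm P {ω | Z ω = l}) := fun l a => by
    haveI := hQprob l; exact (hyQ l a).integrable one_le_two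
  have hd : ∀ a, MemLp (fun ω => y a ω - μX a ω) 2 P := fun a => (hy a).sub (hμ a)
  have hRXd : ∀ l, RX l = Matrix.diagonal (fun a =>
      (π a)⁻¹ * (condMean P {ω | Z ω = l} (μX a) - ∫ ω, μX a ω ∂P)) := by
    intro l
    have e : (fun a => (π a)⁻¹ * condMean P {ω | Z ω = l} (fun ω => μX a ω - ∫ ω', μX a ω' ∂P))
        = fun a => (π a)⁻¹ * (condMean P {ω | Z ω = l} (μX a) - ∫ ω, μX a ω ∂P) :=
      funext fun a => by rw [condMean_sub_const (hQprob l) (hμQi l a)]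
    rw [hRX l, e]
  have hRYd : ∀ l, RY l = Matrix.diagonal (fun a =>
      (π a)⁻¹ * (condMean P {ω | Z ω = l} (μX a) - ∫ ω, μX a ω ∂P)) := by
    intro l
    have e : (fun a => (π a)⁻¹ * condMean P {ω | Z ω = l} (fun ω => y a ω - θ a))
        = fun a => (π a)⁻¹ * (condMean P {ω | Z ω = l} (μX a) - ∫ ω, μX a ω ∂P) := by
      funext a
      have h1 : condMean P {ω | Z ω = l} (fun ω => y a ω - θ a)
          = condMean P {ω | Z ω = l} (y a) - θ a :=
        condMean_sub_const (hQprob l) (hyQi l a) _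
      have h3 := hU l a
      rw [condMean_sub (hyQi l a) (hμQi l a)] at h3
      rw [h1]
      congr 1
      linarith
    rw [hRY l, e]
  have hμy : ∀ a b, covR P (μX a) (y b) = covR P (μX a) (μX b) := by
    intro a b
    have h := covR_sub_right (hy b) (hμ b) (hμ a)
    have h0 : covR P (μX a) (fun ω => y b ω - μX b ω) = 0 := by
      rw [covR_comm]; exact hG2 b a
    linarith
  have hyy : ∀ a, covR P (y a) (y a)
      = covR P (fun ω => y a ω - μX a ω) (fun ω => y a ω - μX a ω)
        + covR P (μX a) (μX a) := by
    intro a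
    have h1 := covR_sub_left (hy a) (hμ a) (hy a)
    have h2 := covR_sub_right (hy a) (hμ a) (hd a)
    have h3 : covR P (fun ω => y a ω - μX a ω) (μX a) = 0 := hG2 a a
    have h4 := hμy a a
    have h5 : covR P (fun ω => y a ω - μX a ω) (y a)
        = covR P (y a) (fun ω => y a ω - μX a ω) := covR_comm
    have h6 : covR P (y a) (μX a) = covR P (μX a) (y a) := covR_comm
    linarith
  have hcov : ∀ a b, covR P (μX a) (μX b) = (∑ l, (P {ω | Z ω = l}).toReal *
        (condMean P {ω | Z ω = l} (fun ω => μX a ω * μX b ω)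
          - condMean P {ω | Z ω = l} (μX a) * condMean P {ω | Z ω = l} (μX b)))
      + ∑ l, (P {ω | Z ω = l}).toReal *
        ((condMean P {ω | Z ω = l} (μX a) - ∫ ω, μX a ω ∂P)
          * (condMean P {ω | Z ω = l} (μX b) - ∫ ω, μX b ω ∂P)) :=
    fun a b => cov_total hZ hZpos (hμ a) (hμ b)
  have hSC : ∀ a (l : Fin L), condMean P {ω | Z ω = l} (fun ω => μX a ω ^ 2)
      = condMean P {ω | Z ω = l} (fun ω => μX a ω * μX a ω) := by
    intro a l; congr 1; funext ω; exact sq (μX a ω)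
  have main : ∀ a b, Vbar a b - V a b = D a b := by
    intro a b
    have hπa := (hπ a).ne'
    have hπb := (hπ b).ne'
    rw [hVbar, hV, hD]
    simp only [hRYd, hRXd, Matrix.sub_apply, Matrix.add_apply, Matrix.sum_apply,
      Matrix.smul_apply, smul_eq_mul, Matrix.diagonal_apply, Matrix.of_apply,
      Matrix.mul_diagonal, Matrix.diagonal_mul, Matrix.vecMulVec_apply]
    rcases eq_or_ne a b with rfl | hab
    · simp only [eq_self_iff_true, ite_true, pow_two]
      rw [hyy a, hμy a a, hG2 a a, hcov a a]
      have e : ∀ l ∈ Finset.univ, (P {ω | Z ω = l}).toReal *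
            ((π a)⁻¹ * (condMean P {ω | Z ω = l} (μX a) - ∫ ω, μX a ω ∂P)
              * (π a - π a * π a - Om l a a)
              * ((π a)⁻¹ * (condMean P {ω | Z ω = l} (μX a) - ∫ ω, μX a ω ∂P)))
          = (π a)⁻¹ * ((P {ω | Z ω = l}).toReal *
              ((condMean P {ω | Z ω = l} (μX a) - ∫ ω, μX a ω ∂P)
                * (condMean P {ω | Z ω = l} (μX a) - ∫ ω, μX a ω ∂P)))
            - (P {ω | Z ω = l}).toReal *
              ((condMean P {ω | Z ω = l} (μX a) - ∫ ω, μX a ω ∂P)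
                * (condMean P {ω | Z ω = l} (μX a) - ∫ ω, μX a ω ∂P))
            - (P {ω | Z ω = l}).toReal *
              ((π a)⁻¹ * (condMean P {ω | Z ω = l} (μX a) - ∫ ω, μX a ω ∂P)
                * Om l a a
                * ((π a)⁻¹ * (condMean P {ω | Z ω = l} (μX a) - ∫ ω, μX a ω ∂P))) := by
        intro l _
        field_simp
      rw [Finset.sum_congr rfl e, Finset.sum_sub_distrib, Finset.sum_sub_distrib,
        ← Finset.mul_sum]
      ring
    · simp only [if_neg hab]
      rw [hμy a b, hG2 a b, hcov a b]
      have e : ∀ l ∈ Finset.univ, (P {ω | Z ω = l}).toReal *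
            ((π a)⁻¹ * (condMean P {ω | Z ω = l} (μX a) - ∫ ω, μX a ω ∂P)
              * (0 - π a * π b - Om l a b)
              * ((π b)⁻¹ * (condMean P {ω | Z ω = l} (μX b) - ∫ ω, μX b ω ∂P)))
          = -((P {ω | Z ω = l}).toReal *
              ((condMean P {ω | Z ω = l} (μX a) - ∫ ω, μX a ω ∂P)
                * (condMean P {ω | Z ω = l} (μX b) - ∫ ω, μX b ω ∂P)))
            - (P {ω | Z ω = l}).toReal *
              ((π a)⁻¹ * (condMean P {ω | Z ω = l} (μX a) - ∫ ω, μX a ω ∂P)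
                * Om l a b
                * ((π b)⁻¹ * (condMean P {ω | Z ω = l} (μX b) - ∫ ω, μX b ω ∂P))) := by
        intro l _
        field_simp
        ring
      rw [Finset.sum_congr rfl e, Finset.sum_sub_distrib, Finset.sum_neg_distrib]
      ring
  refine ⟨?_, ?_⟩
  · ext a b
    rw [Matrix.sub_apply]
    exact main a b
  · intro hOm
    -- D as a sum of PSD matrices
    have hA : Matrix.diagonal (fun a => (π a)⁻¹ * ∑ l, (P {ω | Z ω = l}).toReal *
          (condMean P {ω | Z ω = l} (fun ω => μX a ω ^ 2)
            - condMean P {ω | Z ω = l} (μX a) ^ 2))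
        = ∑ l, (P {ω | Z ω = l}).toReal • Matrix.diagonal (fun a => (π a)⁻¹ *
          (condMean P {ω | Z ω = l} (fun ω => μX a ω ^ 2)
            - condMean P {ω | Z ω = l} (μX a) ^ 2)) := by
      ext a b
      simp only [Matrix.diagonal_apply, Matrix.sum_apply, Matrix.smul_apply, smul_eq_mul,
        mul_ite, mul_zero]
      rw [Finset.sum_ite_irrel]
      split_ifs with h
      · rw [Finset.mul_sum]
        exact Finset.sum_congr rfl fun l _ => by ring
      · simp
    have hB : (Matrix.of (fun a b => ∑ l, (P {ω | Z ω = l}).toReal *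
          (condMean P {ω | Z ω = l} (fun ω => μX a ω * μX b ω)
            - condMean P {ω | Z ω = l} (μX a) * condMean P {ω | Z ω = l} (μX b)))
          : Matrix (Fin k) (Fin k) ℝ)
        = ∑ l, (P {ω | Z ω = l}).toReal • Matrix.of (fun a b =>
          condMean P {ω | Z ω = l} (fun ω => μX a ω * μX b ω)
            - condMean P {ω | Z ω = l} (μX a) * condMean P {ω | Z ω = l} (μX b)) := by
      ext a b
      simp [Matrix.sum_apply]
    have hDsum : D = ∑ l, (P {ω | Z ω = l}).toReal •
        ((Matrix.diagonal (fun a => (π a)⁻¹ *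
            (condMean P {ω | Z ω = l} (fun ω => μX a ω ^ 2)
              - condMean P {ω | Z ω = l} (μX a) ^ 2))
          - Matrix.of (fun a b =>
            condMean P {ω | Z ω = l} (fun ω => μX a ω * μX b ω)
              - condMean P {ω | Z ω = l} (μX a) * condMean P {ω | Z ω = l} (μX b)))
         + RX l * Om l * RX l) := by
      rw [hD, hA, hB, ← Finset.sum_sub_distrib, ← Finset.sum_add_distrib]
      exact Finset.sum_congr rfl fun l _ => by rw [smul_add, smul_sub]
    rw [hDsum]
    refine Finset.sum_induction _ Matrix.PosSemidef
      (fun A B hA hB => hA.add hB) Matrix.PosSemidef.zero (fun l _ => ?_)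
    refine psd_smul ENNReal.toReal_nonneg (Matrix.PosSemidef.add ?_ ?_)
    · -- diag - C is PSD via Cauchy–Schwarz
      haveI := hQprob l
      refine Matrix.PosSemidef.of_dotProduct_mulVec_nonneg ?_ ?_
      · show _ = _
        ext a b
        simp only [Matrix.conjTranspose_apply, Matrix.sub_apply, Matrix.diagonal_apply,
          Matrix.of_apply, star_trivial]
        have hmm : condMean P {ω | Z ω = l} (fun ω => μX b ω * μX a ω)
            = condMean P {ω | Z ω = l} (fun ω => μX a ω * μX b ω) := by
          congr 1; funext ω; ring
        rw [hmm]
        rcases eq_or_ne a b with rfl | hab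
        · ring
        · rw [if_neg hab, if_neg (Ne.symm hab)]
          ring
      · intro xv
        have expand : star xv ⬝ᵥ ((Matrix.diagonal (fun a => (π a)⁻¹ *
              (condMean P {ω | Z ω = l} (fun ω => μX a ω ^ 2)
                - condMean P {ω | Z ω = l} (μX a) ^ 2))
            - Matrix.of (fun a b =>
              condMean P {ω | Z ω = l} (fun ω => μX a ω * μX b ω)
                - condMean P {ω | Z ω = l} (μX a) * condMean P {ω | Z ω = l} (μX b))) *ᵥ xv)
            = (∑ a, (π a)⁻¹ * xv a ^ 2 *
                ((∫ ω, μX a ω ^ 2 ∂(Qm P {ω | Z ω = l}))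
                  - (∫ ω, μX a ω ∂(Qm P {ω | Z ω = l})) ^ 2))
              - ∑ a, ∑ b, xv a * xv b *
                ((∫ ω, μX a ω * μX b ω ∂(Qm P {ω | Z ω = l}))
                  - (∫ ω, μX a ω ∂(Qm P {ω | Z ω = l}))
                    * (∫ ω, μX b ω ∂(Qm P {ω | Z ω = l}))) := by
          simp only [← condMean_eq, dotProduct, Matrix.mulVec, Matrix.sub_apply,
            Matrix.diagonal_apply, Matrix.of_apply, star_trivial, sub_mul, ite_mul, zero_mul,
            Finset.sum_sub_distrib, Finset.sum_ite_eq, Finset.mem_univ, if_true, mul_sub,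
            Finset.mul_sum]
          congr 1
          · congr 1
            · exact Finset.sum_congr rfl fun a _ => by ring
            · exact Finset.sum_congr rfl fun a _ => by ring
          · congr 1
            · exact Finset.sum_congr rfl fun a _ => Finset.sum_congr rfl fun b _ => by ring
            · exact Finset.sum_congr rfl fun a _ => Finset.sum_congr rfl fun b _ => by ring
        rw [expand, sub_nonneg]
        exact cs_quad (Qm P {ω | Z ω = l}) π xv hπ hπsum μX (hμQ l)
    · -- RX * Om * RX is PSD
      have hRXh : (RX l)ᴴ = RX l := by
        rw [hRXd l, Matrix.diagonal_conjTranspose]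
        congr 1
      have := (hOm l).mul_mul_conjTranspose_same (RX l)
      rwa [hRXh] at this
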